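/- (Phase transition for δ = 0.) Let ε > 0 and let m be a distribution on V with prefix sums s⁰, and for t ∈ ℕ let s^t denote the prefix sums of T_{ε,0}^t(m). Fix 1 ≤ k ≤ q with s⁰_k > 0 and set τ_k = ⌊max{−ln(s⁰_k·(e^ε + 1))/ε + 1, 0}⌋. Then s^t_k ≤ 1/(e^ε + 1) for all 0 ≤ t ≤ τ_k − 1, and s^t_k ≥ 1/(e^ε + 1) for all t ≥ τ_k. -/

import Mathlib

/-!
For `δ = 0` each prefix sum evolves on its own under the scalar map
`φ(s) = min {1, e^ε s, 1 - e^{-ε} (1 - s)}`. Below `c = 1/(e^ε + 1)` the map `φ` is multiplication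
by `e^ε`, and it sends `[c, ∞)` into `[c, ∞)`. Hence `s^t_k = e^{tε} s⁰_k` as long as this is
at most `c`, and `s^t_k ≥ min {c, e^{tε} s⁰_k}` for every `t`. Taking logarithms, `τ_k` is exactly
the number of `t` with `e^{tε} s⁰_k ≤ c`.
-/

open Finset

/-- Prefix sum `s_k = p_1 + ⋯ + p_k` (0-indexed internally: sum of entries with index `< k`). -/
noncomputable def prefixSum (q : ℕ) (p : Fin q → ℝ) (k : ℕ) : ℝ :=
  ∑ i ∈ Finset.univ.filter (fun i : Fin q => (i : ℕ) < k), p i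

/-- `p` is a probability distribution on `V = {1, …, q}`. -/
def IsDist (q : ℕ) (p : Fin q → ℝ) : Prop :=
  (∀ k, 0 ≤ p k) ∧ ∑ k, p k = 1

/-- The modified prefix sums `s'_k` defining the operator `T_{ε,δ}`:
`s'_0 = 0` and `s'_k = min {1, min {e^ε s_k, 1 - e^{-ε} (1 - s_k)} + δ}` for `k ≥ 1`. -/
noncomputable def sPrime (ε δ : ℝ) (q : ℕ) (p : Fin q → ℝ) (k : ℕ) : ℝ :=
  if k = 0 then 0
  else min 1 (min (Real.exp ε * prefixSum q p k)
      (1 - Real.exp (-ε) * (1 - prefixSum q p k)) + δ)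

/-- The operator `T_{ε,δ}`: `(T_{ε,δ} p)_k = s'_k - s'_{k-1}`. -/
noncomputable def Tmap (ε δ : ℝ) (q : ℕ) (p : Fin q → ℝ) : Fin q → ℝ :=
  fun k => sPrime ε δ q p ((k : ℕ) + 1) - sPrime ε δ q p (k : ℕ)

/-- `P` and `Q` are `(ε,δ)`-close: for every `S ⊆ V`,
`P(S) ≤ e^ε Q(S) + δ` and `Q(S) ≤ e^ε P(S) + δ`. -/
def Close (ε δ : ℝ) (q : ℕ) (P Q : Fin q → ℝ) : Prop :=
  ∀ S : Finset (Fin q),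
    (∑ k ∈ S, P k) ≤ Real.exp ε * (∑ k ∈ S, Q k) + δ ∧
    (∑ k ∈ S, Q k) ≤ Real.exp ε * (∑ k ∈ S, P k) + δ

/-- Dominance ordering: `x ⪯ y` iff every prefix sum of `x` is at most that of `y`. -/
def Dom (q : ℕ) (x y : Fin q → ℝ) : Prop :=
  ∀ k : ℕ, k ≤ q → prefixSum q x k ≤ prefixSum q y k

noncomputable def prefixUpdate (ε δ s : ℝ) : ℝ :=
  min 1 (min (Real.exp ε * s) (1 - Real.exp (-ε) * (1 - s)) + δ)

lemma prefixSum_succ (q : ℕ) (x : Fin q → ℝ) {k : ℕ} (hk : k < q) :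
    prefixSum q x (k + 1) = prefixSum q x k + x ⟨k, hk⟩ := by
  unfold prefixSum
  rw [show univ.filter (fun i : Fin q => (i : ℕ) < k + 1)
      = insert (⟨k, hk⟩ : Fin q) (univ.filter (fun i : Fin q => (i : ℕ) < k)) from ?_,
    sum_insert (by simp), add_comm]
  ext i
  simp [Fin.ext_iff]
  omega

lemma prefixSum_Tmap (ε δ : ℝ) (q : ℕ) (p : Fin q → ℝ) {k : ℕ} (hk : k ≤ q) :
    prefixSum q (Tmap ε δ q p) k = sPrime ε δ q p k := by
  induction k with
  | zero => simp [prefixSum, sPrime]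
  | succ n ih =>
    rw [prefixSum_succ q _ hk, ih (Nat.le_of_succ_le hk)]
    simp [Tmap]

lemma prefixSum_iterate_Tmap (ε δ : ℝ) (q : ℕ) (p : Fin q → ℝ) {k : ℕ} (hk0 : k ≠ 0)
    (hkq : k ≤ q) (t : ℕ) :
    prefixSum q ((Tmap ε δ q)^[t] p) k = (prefixUpdate ε δ)^[t] (prefixSum q p k) := by
  induction t with
  | zero => rfl
  | succ t ih =>
    rw [Function.iterate_succ_apply', Function.iterate_succ_apply', prefixSum_Tmap ε δ q _ hkq,
      sPrime, if_neg hk0, ih, prefixUpdate]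

lemma prefixUpdate_zero_eq_of_le {ε s : ℝ} (hε : 0 ≤ ε) (hs : s ≤ 1 / (Real.exp ε + 1)) :
    prefixUpdate ε 0 s = Real.exp ε * s := by
  have hE : 1 ≤ Real.exp ε := Real.one_le_exp hε
  have hinv : Real.exp (-ε) * Real.exp ε = 1 := by rw [← Real.exp_add]; simp
  have hs' : s * (Real.exp ε + 1) ≤ 1 := (le_div_iff₀ (by positivity)).1 hs
  have hgap : 1 - Real.exp (-ε) * (1 - s) - Real.exp ε * s
      = Real.exp (-ε) * ((Real.exp ε - 1) * (1 - s * (Real.exp ε + 1))) := by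
    linear_combination (Real.exp ε * s - 1) * hinv
  have hbranch : Real.exp ε * s ≤ 1 - Real.exp (-ε) * (1 - s) := by
    have := mul_nonneg (Real.exp_pos (-ε)).le
      (mul_nonneg (sub_nonneg.2 hE) (sub_nonneg.2 hs'))
    linarith
  have hone : Real.exp ε * s ≤ 1 := by
    rcases le_or_gt 0 s with h | h <;> nlinarith
  rw [prefixUpdate, add_zero, min_eq_left hbranch, min_eq_right hone]

lemma le_prefixUpdate_zero_of_le {ε s : ℝ} (hε : 0 ≤ ε) (hs : 1 / (Real.exp ε + 1) ≤ s) :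
    1 / (Real.exp ε + 1) ≤ prefixUpdate ε 0 s := by
  have hE : 1 ≤ Real.exp ε := Real.one_le_exp hε
  have hc0 : 0 < 1 / (Real.exp ε + 1) := by positivity
  have hc1 : 1 / (Real.exp ε + 1) ≤ 1 := by rw [div_le_one (by positivity)]; linarith
  have he : Real.exp (-ε) ≤ 1 := Real.exp_le_one_iff.2 (by linarith)
  rw [prefixUpdate, add_zero]
  refine le_min hc1 (le_min ?_ ?_)
  · nlinarith [mul_nonneg (sub_nonneg.2 hE) (hc0.le.trans hs)]
  · nlinarith [mul_nonneg (Real.exp_pos (-ε)).le (sub_nonneg.2 hs),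
      mul_nonneg (sub_nonneg.2 he) (sub_nonneg.2 hc1)]

lemma iterate_prefixUpdate_zero_eq_of_le {ε s : ℝ} (hε : 0 ≤ ε) (hs : 0 ≤ s) {t : ℕ}
    (ht : Real.exp ε ^ t * s ≤ 1 / (Real.exp ε + 1)) :
    (prefixUpdate ε 0)^[t] s = Real.exp ε ^ t * s := by
  induction t with
  | zero => simp
  | succ t ih =>
    have hmono : Real.exp ε ^ t * s ≤ Real.exp ε ^ (t + 1) * s :=
      mul_le_mul_of_nonneg_right (pow_le_pow_right₀ (Real.one_le_exp hε) t.le_succ) hs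
    rw [Function.iterate_succ_apply', ih (hmono.trans ht),
      prefixUpdate_zero_eq_of_le hε (hmono.trans ht), pow_succ]
    ring

lemma min_exp_pow_mul_le_iterate_prefixUpdate_zero {ε : ℝ} (hε : 0 ≤ ε) (s : ℝ) (t : ℕ) :
    min (1 / (Real.exp ε + 1)) (Real.exp ε ^ t * s) ≤ (prefixUpdate ε 0)^[t] s := by
  induction t with
  | zero => simp
  | succ t ih =>
    rw [Function.iterate_succ_apply']
    rcases le_or_gt (1 / (Real.exp ε + 1)) ((prefixUpdate ε 0)^[t] s) with hge | hlt
    · exact (min_le_left _ _).trans (le_prefixUpdate_zero_of_le hε hge)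
    · have hE : 0 ≤ Real.exp ε := (Real.exp_pos ε).le
      rw [prefixUpdate_zero_eq_of_le hε hlt.le]
      calc min (1 / (Real.exp ε + 1)) (Real.exp ε ^ (t + 1) * s)
          ≤ min (Real.exp ε * (1 / (Real.exp ε + 1))) (Real.exp ε * (Real.exp ε ^ t * s)) := by
            refine min_le_min (le_mul_of_one_le_left (by positivity) (Real.one_le_exp hε)) ?_
            rw [pow_succ]; linarith
        _ = Real.exp ε * min (1 / (Real.exp ε + 1)) (Real.exp ε ^ t * s) :=
            (mul_min_of_nonneg _ _ hE).symm
        _ ≤ Real.exp ε * (prefixUpdate ε 0)^[t] s := mul_le_mul_of_nonneg_left ih hE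

lemma exp_pow_mul_le_iff {ε s : ℝ} (hε : 0 < ε) (hs : 0 < s) (t : ℕ) :
    Real.exp ε ^ t * s ≤ 1 / (Real.exp ε + 1) ↔
      (t : ℝ) ≤ -Real.log (s * (Real.exp ε + 1)) / ε := by
  have hpos : 0 < s * (Real.exp ε + 1) := by positivity
  have hexp : Real.exp ε ^ t * s * (Real.exp ε + 1)
      = Real.exp (t * ε + Real.log (s * (Real.exp ε + 1))) := by
    rw [Real.exp_add, Real.exp_log hpos, Real.exp_nat_mul, mul_assoc]
  rw [le_div_iff₀ (by positivity), hexp, Real.exp_le_one_iff, le_div_iff₀ hε]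
  constructor <;> intro h <;> linarith

lemma succ_le_floor_max_iff (A : ℝ) (t : ℕ) : t + 1 ≤ ⌊max (A + 1) 0⌋₊ ↔ (t : ℝ) ≤ A := by
  have ht : (0 : ℝ) ≤ t := t.cast_nonneg
  rw [Nat.le_floor_iff (le_max_right _ _), le_max_iff]
  push_cast
  constructor
  · rintro (h | h) <;> linarith
  · intro h; left; linarith

theorem phase_transition_delta_zero_general (q : ℕ) (ε : ℝ) (hε : 0 < ε)
    (m : Fin q → ℝ) (k : ℕ) (hk1 : 1 ≤ k) (hkq : k ≤ q)
    (hpos : 0 < prefixSum q m k)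
    (τ : ℕ) (hτ : τ = ⌊max (-(Real.log (prefixSum q m k * (Real.exp ε + 1))) / ε + 1) 0⌋₊) :
    (∀ t : ℕ, t + 1 ≤ τ →
      prefixSum q ((Tmap ε 0 q)^[t] m) k ≤ 1 / (Real.exp ε + 1)) ∧
    (∀ t : ℕ, τ ≤ t →
      1 / (Real.exp ε + 1) ≤ prefixSum q ((Tmap ε 0 q)^[t] m) k) := by
  have hτ_iff : ∀ t : ℕ,
      t + 1 ≤ τ ↔ Real.exp ε ^ t * prefixSum q m k ≤ 1 / (Real.exp ε + 1) := fun t => by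
    rw [hτ, succ_le_floor_max_iff, exp_pow_mul_le_iff hε hpos]
  simp only [prefixSum_iterate_Tmap ε 0 q m (Nat.one_le_iff_ne_zero.1 hk1) hkq]
  refine ⟨fun t ht => ?_, fun t ht => ?_⟩
  · have hbelow := (hτ_iff t).1 ht
    rwa [iterate_prefixUpdate_zero_eq_of_le hε.le hpos.le hbelow]
  · have habove : 1 / (Real.exp ε + 1) < Real.exp ε ^ t * prefixSum q m k :=
      lt_of_not_ge fun h => by have := (hτ_iff t).2 h; omega
    calc 1 / (Real.exp ε + 1)
        = min (1 / (Real.exp ε + 1)) (Real.exp ε ^ t * prefixSum q m k) :=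
          (min_eq_left habove.le).symm
      _ ≤ _ := min_exp_pow_mul_le_iterate_prefixUpdate_zero hε.le _ t

/-- phase transition for δ = 0: with `s^t` the prefix sums of `T_{ε,0}^t(m)`,
`s⁰_k > 0`, and `τ_k = ⌊max {−ln(s⁰_k (e^ε + 1))/ε + 1, 0}⌋`, we have
`s^t_k ≤ 1/(e^ε + 1)` for `0 ≤ t ≤ τ_k − 1` and `s^t_k ≥ 1/(e^ε + 1)` for `t ≥ τ_k`. -/
theorem phase_transition_delta_zero (q : ℕ) (hq : 1 ≤ q) (ε : ℝ) (hε : 0 < ε)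
    (m : Fin q → ℝ) (hm : IsDist q m) (k : ℕ) (hk1 : 1 ≤ k) (hkq : k ≤ q)
    (hpos : 0 < prefixSum q m k)
    (τ : ℕ) (hτ : τ = ⌊max (-(Real.log (prefixSum q m k * (Real.exp ε + 1))) / ε + 1) 0⌋₊) :
    (∀ t : ℕ, t + 1 ≤ τ →
      prefixSum q ((Tmap ε 0 q)^[t] m) k ≤ 1 / (Real.exp ε + 1)) ∧
    (∀ t : ℕ, τ ≤ t →
      1 / (Real.exp ε + 1) ≤ prefixSum q ((Tmap ε 0 q)^[t] m) k) :=
  phase_transition_delta_zero_general q ε hε m k hk1 hkq hpos τ hτ
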